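/- Let L_b ≥ 1, let ψ be a nonzero state, let n ∈ ℤ, and suppose H1 ψ = √2·n·ψ. Then ψ is an eigenstate of U with eigenvalue (−1)^{L_b + n}: ψ(σ ∘ c) = (−1)^{L_b + n} · ψ(c) for every configuration c. -/

import Mathlib

open Finset

/-- The blocked three-letter alphabet `{O, L, R}`. -/
inductive Blk | O | L | R
deriving DecidableEq

/-- The involution of `{O, L, R}` exchanging `L` and `R` and fixing `O`. -/
def Blk.sigma : Blk → Blk
  | .O => .O
  | .L => .R
  | .R => .L

/-- The one-body Hamiltonian in the blocked basis. -/
noncomputable def H1 {N : ℕ} (ψ : (Fin N → Blk) → ℂ) (c : Fin N → Blk) : ℂ :=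
  ∑ j : Fin N,
    if c j = Blk.O then
      ψ (Function.update c j Blk.L) + ψ (Function.update c j Blk.R)
    else ψ (Function.update c j Blk.O)

/-!
On one block, the hopping `O ↔ L`, `O ↔ R` is a symmetric 3 × 3 matrix with eigenvectors
`(0, 1, -1)`, `(√2, 1, 1)`, `(-√2, 1, 1)` (components at `O, L, R`) for the eigenvalues `0`, `√2`,
`-√2`; the first is odd and the other two are even under `L ↔ R`. Their tensor products form an
orthogonal eigenbasis of `H1`: the product labelled by `τ` has `H1`-eigenvalue `√2 · Σ energy`
and `U`-eigenvalue `(-1)^(#O in τ) = (-1)^(L_b + Σ energy)`. Since `H1` is symmetric, the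
coefficients of an eigenstate for `√2 · n` vanish unless `Σ energy = n`, so `U` acts on it as
`(-1)^(L_b + n)`.
-/

theorem Finset.prod_zpow_eq_zpow_sum₀ {ι G₀ : Type*} [CommGroupWithZero G₀] (s : Finset ι)
    (a : ι → ℤ) {x : G₀} (hx : x ≠ 0) : ∏ i ∈ s, x ^ a i = x ^ ∑ i ∈ s, a i := by
  induction s using Finset.cons_induction with
  | empty => simp
  | cons i s hi ih => rw [prod_cons, sum_cons, ih, zpow_add₀ hx]

theorem Complex.ofReal_sqrt_two_sq : (Real.sqrt 2 : ℂ) ^ 2 = 2 := by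
  exact_mod_cast Real.sq_sqrt zero_le_two

open scoped Matrix

section SiteOperators

variable {ι α R : Type*} [Fintype ι] [DecidableEq ι] [Fintype α] [CommSemiring R]

theorem sum_mul_mulVec_update_comm {A : Matrix α α R} (hA : A.IsSymm) (j : ι)
    (φ ψ : (ι → α) → R) :
    ∑ c, φ c * (A *ᵥ fun y => ψ (Function.update c j y)) (c j)
      = ∑ c, (A *ᵥ fun y => φ (Function.update c j y)) (c j) * ψ c := by
  -- `(c, y) ↦ (c[j ↦ y], c j)` is an involution of the pairs exchanging the two sides.
  let e : (ι → α) × α → (ι → α) × α := fun p => (Function.update p.1 j p.2, p.1 j)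
  have he : Function.Involutive e := fun p => by
    simp [e, Function.update_idem, Function.update_eq_self]
  simp only [Matrix.mulVec, dotProduct, mul_sum, sum_mul, ← Fintype.sum_prod_type']
  refine (Fintype.sum_bijective e he.bijective _ _ fun p => ?_)
  simp only [e, Function.update_self, Function.update_idem, Function.update_eq_self,
    hA.apply]
  ring

theorem mulVec_update_prod {A : Matrix α α R} {v : ι → α → R} {j : ι} {μ : R}
    (hv : A *ᵥ v j = μ • v j) (c : ι → α) :
    (A *ᵥ fun y => ∏ k, v k (Function.update c j y k)) (c j) = μ * ∏ k, v k (c k) := by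
  have hsplit : ∀ y, ∏ k, v k (Function.update c j y k)
      = v j y * ∏ k ∈ univ \ {j}, v k (c k) := fun y => by
    simp_rw [Function.apply_update (fun k => v k), prod_update_of_mem (mem_univ j)]
  have hv' := congrFun hv (c j)
  simp only [Matrix.mulVec, dotProduct, Pi.smul_apply, smul_eq_mul] at hv' ⊢
  have hc : ∏ k, v k (c k) = v j (c j) * ∏ k ∈ univ \ {j}, v k (c k) := by
    simpa using hsplit (c j)
  rw [hc]
  simp_rw [hsplit, ← mul_assoc, ← sum_mul, hv']

end SiteOperators

instance : Fintype Blk := ⟨{.O, .L, .R}, fun x => by cases x <;> simp⟩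

namespace Blk

theorem sum_univ {M : Type*} [AddCommMonoid M] (f : Blk → M) :
    ∑ x, f x = f O + f L + f R := by
  show ∑ x ∈ {O, L, R}, f x = _
  simp [add_assoc]

theorem sigma_involutive : Function.Involutive sigma := by
  intro x; cases x <;> rfl

def hop : Matrix Blk Blk ℂ := fun x y => if (x = O ↔ y = O) then 0 else 1

theorem hop_isSymm : hop.IsSymm := by
  ext x y; simp [hop, Matrix.transpose_apply, iff_comm]

theorem ite_eq_hop_mulVec (g : Blk → ℂ) (x : Blk) :
    (if x = O then g L + g R else g O) = (hop *ᵥ g) x := by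
  cases x <;> simp [hop, Matrix.mulVec, dotProduct, sum_univ]

def energy : Blk → ℤ
  | O => 0
  | L => 1
  | R => -1

noncomputable def mode : Blk → Blk → ℂ
  | O, O => 0
  | O, L => 1
  | O, R => -1
  | L, O => Real.sqrt 2
  | L, L => 1
  | L, R => 1
  | R, O => -Real.sqrt 2
  | R, L => 1
  | R, R => 1

noncomputable def invNormSq : Blk → ℂ
  | O => 1 / 2
  | L => 1 / 4
  | R => 1 / 4

theorem hop_mulVec_mode (t : Blk) : hop *ᵥ mode t = (Real.sqrt 2 * energy t : ℂ) • mode t := by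
  ext x
  cases t <;> cases x <;> simp [hop, mode, energy, Matrix.mulVec, dotProduct, sum_univ] <;>
    ring_nf <;> simp [Complex.ofReal_sqrt_two_sq]

-- `1 + energy t` is odd exactly for `t = O`.
theorem mode_sigma (t x : Blk) : mode t (sigma x) = (-1) ^ (1 + energy t) * mode t x := by
  cases t <;> cases x <;> simp [mode, sigma, energy]

theorem sum_invNormSq_mul_mode_mul_mode (x y : Blk) :
    ∑ t, invNormSq t * (mode t x * mode t y) = if x = y then 1 else 0 := by
  cases x <;> cases y <;> simp [invNormSq, mode, sum_univ] <;> ring_nf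
  all_goals simp [Complex.ofReal_sqrt_two_sq]

end Blk

open Blk

section ModeExpansion

variable {ι : Type*} [Fintype ι] [DecidableEq ι]

noncomputable def modeProd (τ c : ι → Blk) : ℂ :=
  ∏ k, mode (τ k) (c k)

noncomputable def modeCoeff (ψ : (ι → Blk) → ℂ) (τ : ι → Blk) : ℂ :=
  ∑ c, modeProd τ c * ψ c

theorem modeCoeff_const_mul (a : ℂ) (ψ : (ι → Blk) → ℂ) (τ : ι → Blk) :
    modeCoeff (fun c => a * ψ c) τ = a * modeCoeff ψ τ := by
  simp only [modeCoeff, mul_sum]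
  exact sum_congr rfl fun c _ => by ring

theorem modeCoeff_comp_sigma (ψ : (ι → Blk) → ℂ) (τ : ι → Blk) :
    modeCoeff (fun c => ψ (sigma ∘ c)) τ
      = (-1) ^ ((Fintype.card ι : ℤ) + ∑ k, energy (τ k)) * modeCoeff ψ τ := by
  have hinv : Function.Involutive (fun c : ι → Blk => sigma ∘ c) := fun c => by
    funext k; exact sigma_involutive (c k)
  have hsign : ∀ c, modeProd τ (sigma ∘ c)
      = (-1) ^ ((Fintype.card ι : ℤ) + ∑ k, energy (τ k)) * modeProd τ c := fun c => by
    simp only [modeProd, Function.comp_apply, mode_sigma, prod_mul_distrib]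
    rw [prod_zpow_eq_zpow_sum₀ _ _ (by norm_num : (-1 : ℂ) ≠ 0), sum_add_distrib]
    simp
  rw [modeCoeff, ← Fintype.sum_bijective _ hinv.bijective _ _ fun c => rfl]
  simp only [hinv _, hsign, modeCoeff, mul_sum, mul_assoc]

theorem sum_modeProd_mul_modeCoeff (ψ : (ι → Blk) → ℂ) (c : ι → Blk) :
    ∑ τ, (∏ k, invNormSq (τ k)) * modeProd τ c * modeCoeff ψ τ = ψ c := by
  have hdelta : ∀ c', ∑ τ : ι → Blk, ∏ k, invNormSq (τ k) * (mode (τ k) (c k) * mode (τ k) (c' k))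
      = if c = c' then 1 else 0 := fun c' => by
    rw [← Fintype.prod_sum (fun k t => invNormSq t * (mode t (c k) * mode t (c' k)))]
    simp only [sum_invNormSq_mul_mode_mul_mode, Fintype.prod_boole, funext_iff]
  calc ∑ τ, (∏ k, invNormSq (τ k)) * modeProd τ c * modeCoeff ψ τ
      = ∑ c', (∑ τ : ι → Blk, ∏ k, invNormSq (τ k) * (mode (τ k) (c k) * mode (τ k) (c' k)))
          * ψ c' := by
        simp only [modeCoeff, modeProd, mul_sum, sum_mul]
        rw [sum_comm]
        exact sum_congr rfl fun c' _ => sum_congr rfl fun τ _ => by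
          simp only [prod_mul_distrib]; ring
    _ = ψ c := by simp [hdelta]

theorem modeCoeff_injective :
    Function.Injective (modeCoeff : ((ι → Blk) → ℂ) → (ι → Blk) → ℂ) := by
  intro φ ψ h
  funext c
  rw [← sum_modeProd_mul_modeCoeff φ, ← sum_modeProd_mul_modeCoeff ψ, h]

end ModeExpansion

section Chain

variable {N : ℕ}

theorem H1_eq_sum_hop_mulVec (ψ : (Fin N → Blk) → ℂ) (c : Fin N → Blk) :
    H1 ψ c = ∑ j, (hop *ᵥ fun y => ψ (Function.update c j y)) (c j) :=
  sum_congr rfl fun j _ => ite_eq_hop_mulVec (fun y => ψ (Function.update c j y)) (c j)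

theorem sum_mul_H1_comm (φ ψ : (Fin N → Blk) → ℂ) :
    ∑ c, φ c * H1 ψ c = ∑ c, H1 φ c * ψ c := by
  simp only [H1_eq_sum_hop_mulVec, mul_sum, sum_mul]
  rw [sum_comm]
  conv_rhs => rw [sum_comm]
  exact sum_congr rfl fun j _ => sum_mul_mulVec_update_comm hop_isSymm j φ ψ

theorem H1_modeProd (τ c : Fin N → Blk) :
    H1 (modeProd τ) c = Real.sqrt 2 * ((∑ k, energy (τ k) : ℤ) : ℂ) * modeProd τ c := by
  rw [H1_eq_sum_hop_mulVec]
  simp only [modeProd]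
  rw [sum_congr rfl fun j _ => mulVec_update_prod (v := fun k => mode (τ k))
    (hop_mulVec_mode (τ j)) c]
  push_cast
  rw [mul_sum, sum_mul]

theorem modeCoeff_H1 (ψ : (Fin N → Blk) → ℂ) (τ : Fin N → Blk) :
    modeCoeff (H1 ψ) τ = Real.sqrt 2 * ((∑ k, energy (τ k) : ℤ) : ℂ) * modeCoeff ψ τ := by
  rw [modeCoeff, sum_mul_H1_comm]
  simp only [H1_modeProd, modeCoeff, mul_sum, mul_assoc]

theorem sum_energy_eq_of_H1_eq {ψ : (Fin N → Blk) → ℂ} {n : ℤ}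
    (hH1 : ∀ c, H1 ψ c = (Real.sqrt 2 : ℂ) * (n : ℂ) * ψ c) {τ : Fin N → Blk}
    (hτ : modeCoeff ψ τ ≠ 0) : ∑ k, energy (τ k) = n := by
  have h : modeCoeff (H1 ψ) τ = Real.sqrt 2 * n * modeCoeff ψ τ := by
    rw [← modeCoeff_const_mul]
    exact congrArg (modeCoeff · τ) (funext hH1)
  rw [modeCoeff_H1] at h
  have hsqrt : (Real.sqrt 2 : ℂ) ≠ 0 := by simp
  exact_mod_cast mul_left_cancel₀ hsqrt (mul_right_cancel₀ hτ h)

end Chain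

theorem H1_eigenstate_is_U_eigenstate_general
    (Lb : ℕ)
    (ψ : (Fin Lb → Blk) → ℂ) (n : ℤ)
    (hH1 : ∀ c, H1 ψ c = (Real.sqrt 2 : ℂ) * (n : ℂ) * ψ c) :
    ∀ c : Fin Lb → Blk, ψ (Blk.sigma ∘ c) = (-1 : ℂ) ^ ((Lb : ℤ) + n) * ψ c := by
  suffices hcoeff : modeCoeff (fun c => ψ (sigma ∘ c))
      = modeCoeff (fun c => (-1 : ℂ) ^ ((Lb : ℤ) + n) * ψ c) from
    congrFun (modeCoeff_injective hcoeff)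
  funext τ
  rw [modeCoeff_comp_sigma, modeCoeff_const_mul, Fintype.card_fin]
  by_cases hτ : modeCoeff ψ τ = 0
  · rw [hτ, mul_zero, mul_zero]
  · rw [sum_energy_eq_of_H1_eq hH1 hτ]

/-- Proposition 2: a nonzero eigenstate of `H1` with eigenvalue
`√2·n` is an eigenstate of the `L ↔ R` exchange operator `U` with eigenvalue
`(−1)^{L_b + n}`. -/
theorem H1_eigenstate_is_U_eigenstate
    (Lb : ℕ) (hLb : 1 ≤ Lb)
    (ψ : (Fin Lb → Blk) → ℂ) (hψ : ψ ≠ 0) (n : ℤ)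
    (hH1 : ∀ c, H1 ψ c = (Real.sqrt 2 : ℂ) * (n : ℂ) * ψ c) :
    ∀ c : Fin Lb → Blk, ψ (Blk.sigma ∘ c) = (-1 : ℂ) ^ ((Lb : ℤ) + n) * ψ c :=
  H1_eigenstate_is_U_eigenstate_general Lb ψ n hH1
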